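/- Suppose 0 < a < 1 and 1 ≤ b ≤ 1/a. Then the supremum of Rs(P1,P2) over all P1 ≥ 0 and P2 ≥ 0 equals (1/2)·log₂(1/a). -/

import Mathlib

/-- `g x = (1/2) * log_2 (1 + x)`. -/
noncomputable def g (x : ℝ) : ℝ := (1 / 2) * Real.logb 2 (1 + x)

/-- The achievable secrecy rate `Rs(P1, P2)` for the Gaussian wiretap channel with a
helping interferer, with channel gains `a`, `b` and powers `P1`, `P2`. -/
noncomputable def Rs (a b P1 P2 : ℝ) : ℝ :=
  if 1 + P2 ≤ a then 0
  else if 1 ≤ a then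
    -- case `1 ≤ a < 1 + P2`
    if 1 + P1 ≤ b then g P1 - g (a * P1 / (1 + P2))
    else if 1 ≤ b then max 0 (g (P1 + b * P2) - g (a * P1 + P2))
    else max 0 (g (P1 / (1 + b * P2)) - g (a * P1 / (1 + P2)))
  else
    -- case `a < 1`, with `β1 = (1+P1)/(1+a*P1)` and `β2 = a*(1+P1)/(1+a*P1+(1-a)*P2)`
    if 1 + P1 ≤ b then g P1 - g (a * P1 / (1 + P2))
    else if (1 + P1) / (1 + a * P1) ≤ b then g (P1 + b * P2) - g (a * P1 + P2)
    else if a * (1 + P1) / (1 + a * P1 + (1 - a) * P2) ≤ b then g P1 - g (a * P1)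
    else g (P1 / (1 + b * P2)) - g (a * P1 / (1 + P2))

/-!
Every difference `g x - g y` occurring in `Rs` for `a < 1 ≤ b ≤ 1/a` satisfies
`1 + x ≤ (1 + y) / a`, hence is at most `(1/2) log₂ (1/a)`. The bound is approached
without interference: with `P2 = 0` and large `P1 = t`, `Rs = g t - g (a t)
= (1/2) log₂ ((1 + t) / (1 + a t)) → (1/2) log₂ (1/a)`.
-/

open Filter Real Topology

lemma tendsto_affine_div_affine_atTop (c p d q : ℝ) (hq : q ≠ 0) :
    Tendsto (fun t : ℝ => (c + p * t) / (d + q * t)) atTop (𝓝 (p / q)) := by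
  have hinv : Tendsto (fun t : ℝ => t⁻¹) atTop (𝓝 0) := tendsto_inv_atTop_zero
  have hlim : Tendsto (fun t : ℝ => (c * t⁻¹ + p) / (d * t⁻¹ + q)) atTop (𝓝 (p / q)) := by
    have := ((hinv.const_mul c).add_const p).div ((hinv.const_mul d).add_const q)
      (by simpa using hq)
    rw [mul_zero, mul_zero, zero_add, zero_add] at this
    exact this
  refine hlim.congr' ?_
  filter_upwards [eventually_gt_atTop 0] with t ht
  field_simp

lemma g_sub_g {x y : ℝ} (hx : 0 < 1 + x) (hy : 0 < 1 + y) :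
    g x - g y = 1 / 2 * logb 2 ((1 + x) / (1 + y)) := by
  unfold g
  rw [logb_div hx.ne' hy.ne']
  ring

lemma g_sub_g_le {x y c : ℝ} (hx : 0 < 1 + x) (hy : 0 < 1 + y) (h : 1 + x ≤ c * (1 + y)) :
    g x - g y ≤ 1 / 2 * logb 2 c := by
  rw [g_sub_g hx hy]
  gcongr
  · norm_num
  · exact (div_le_iff₀ hy).2 h

theorem Rs_le_half_logb_inv {a b P1 P2 : ℝ} (ha0 : 0 < a) (ha : a < 1) (hb1 : 1 ≤ b)
    (hb2 : b ≤ 1 / a) (hP1 : 0 ≤ P1) (hP2 : 0 ≤ P2) :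
    Rs a b P1 P2 ≤ 1 / 2 * logb 2 (1 / a) := by
  have hab : a * b ≤ 1 := by rwa [le_div_iff₀ ha0, mul_comm] at hb2
  have hinv_mul {u v : ℝ} (h : a * u ≤ v) : u ≤ 1 / a * v := by
    rwa [one_div_mul_eq_div, le_div_iff₀ ha0, mul_comm]
  unfold Rs
  rw [if_neg (by linarith), if_neg (by linarith)]
  split_ifs with h1 h2 h3
  · have hy : 0 ≤ a * P1 / (1 + P2) := by positivity
    exact g_sub_g_le (by linarith) (by linarith) (hinv_mul (by nlinarith))
  · exact g_sub_g_le (by positivity) (by positivity) (hinv_mul (by nlinarith))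
  · exact g_sub_g_le (by positivity) (by positivity) (hinv_mul (by nlinarith))
  · -- unreachable: `β2 ≤ 1 ≤ b`
    refine absurd (le_trans ?_ hb1) h3
    exact (div_le_one (by nlinarith)).2 (by nlinarith)

lemma Rs_without_interference {a b t : ℝ} (ha0 : 0 ≤ a) (ha : a < 1) (hb : 1 ≤ b) (ht : b < 1 + t) :
    Rs a b t 0 = g t - g (a * t) := by
  have ht0 : 0 ≤ t := by linarith
  have hβ2 : a * (1 + t) / (1 + a * t + (1 - a) * 0) ≤ b :=
    (div_le_one (by positivity)).2 (by nlinarith) |>.trans hb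
  unfold Rs
  rw [if_neg (by linarith), if_neg (by linarith), if_neg (by linarith)]
  -- at `P2 = 0` the `β1`-branch and the `β2`-branch give the same value
  split_ifs <;> simp

lemma tendsto_g_sub_g_mul_atTop {a : ℝ} (ha : 0 < a) :
    Tendsto (fun t => g t - g (a * t)) atTop (𝓝 (1 / 2 * logb 2 (1 / a))) := by
  have hratio := tendsto_affine_div_affine_atTop 1 1 1 a ha.ne'
  refine ((hratio.logb (by positivity)).const_mul (1 / 2)).congr' ?_
  filter_upwards [eventually_ge_atTop 0] with t ht
  rw [one_mul, g_sub_g (by positivity) (by positivity)]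

/-- If `0 < a < 1` and `1 ≤ b ≤ 1/a`, the supremum of `Rs(P1,P2)` over all `P1 ≥ 0`, `P2 ≥ 0`
equals `(1/2) log₂ (1/a)`. -/
theorem stmt5 (a b : ℝ) (ha0 : 0 < a) (ha : a < 1) (hb1 : 1 ≤ b) (hb2 : b ≤ 1 / a) :
    IsLUB {r : ℝ | ∃ P1 P2 : ℝ, 0 ≤ P1 ∧ 0 ≤ P2 ∧ r = Rs a b P1 P2}
      ((1 / 2) * Real.logb 2 (1 / a)) := by
  refine ⟨?_, fun x hx => ?_⟩
  · rintro r ⟨P1, P2, hP1, hP2, rfl⟩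
    exact Rs_le_half_logb_inv ha0 ha hb1 hb2 hP1 hP2
  · refine le_of_tendsto (tendsto_g_sub_g_mul_atTop ha0) ?_
    filter_upwards [eventually_gt_atTop (b - 1)] with t ht
    exact hx ⟨t, 0, by linarith, le_rfl, (Rs_without_interference ha0.le ha hb1 (by linarith)).symm⟩
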